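/- arXiv:1205.1050 — 2 statements merged into one kernel-verified Lean document; each statement's English description precedes it below -/
import Mathlib

section
/- If G is a pointed graph with pebbling number ♯G = p, then there are at least p vertices v in G admitting a v-critical assignment for Peb(G); in particular, G has at least p vertices. -/
/-!
Every vertex `v` admits a `v`-critical assignment: make true exactly the vertices not reachable
from `v`. The clause of `v` is then false (by acyclicity no predecessor of `v` is reachable from
`v`), while the clause of any other vertex `w` holds: if `w` is reachable from `v`, so is the
predecessor of `w` on such a path; otherwise `w` is true (and not the sink, which `v` reaches).
On the other hand, pebbling all vertices in topological order, never removing a pebble, is a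
strategy of cost `|V|`. Hence `♯G ≤ |V|` = the number of vertices with a critical assignment.
-/

attribute [local instance] Classical.propDecidable

/-- A clause: a finite set of literals, a literal being a variable with a sign. -/
abbrev Clause := Finset (ℕ × Bool)

/-- A total truth assignment satisfies a clause if it makes some literal true. -/
def clauseSat (a : ℕ → Bool) (C : Clause) : Prop :=
  ∃ l ∈ C, (if l.2 then a l.1 else !(a l.1)) = true

/-- A set of clauses is unsatisfiable (contradictory). -/
def Unsat (S : Set Clause) : Prop := ∀ a : ℕ → Bool, ¬ ∀ C ∈ S, clauseSat a C

/-- A directed graph with a designated sink vertex. -/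
structure PGraph where
  verts : Finset ℕ
  edges : Finset (ℕ × ℕ)
  sink : ℕ

def edgeRel (G : PGraph) (u v : ℕ) : Prop := (u, v) ∈ G.edges

def Reach (G : PGraph) (u v : ℕ) : Prop := Relation.ReflTransGen (edgeRel G) u v

noncomputable def preds (G : PGraph) (v : ℕ) : Finset ℕ :=
  (G.edges.filter (fun e => e.2 = v)).image Prod.fst

/-- A pointed graph: a DAG whose edges join vertices, indegrees at most 2, with a
unique sink belonging to the graph and reachable from every vertex. -/
def IsPointed (G : PGraph) : Prop :=
  G.sink ∈ G.verts ∧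
  (∀ e ∈ G.edges, e.1 ∈ G.verts ∧ e.2 ∈ G.verts) ∧
  (∀ v, ¬ Relation.TransGen (edgeRel G) v v) ∧
  (∀ v ∈ G.verts, (preds G v).card ≤ 2) ∧
  (∀ v ∈ G.verts, Reach G v G.sink)

/-- The clause of the pebbling formula associated with a vertex: the negations of its
predecessors, together with the vertex itself positively (omitted at the sink, which
plays the role of ⊥). Sources thus get unit clauses. -/
noncomputable def ClauseOf (G : PGraph) (v : ℕ) : Clause :=
  ((preds G v).image (fun u => (u, false))) ∪
    (if v = G.sink then (∅ : Clause) else {(v, true)})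

/-- The pebbling formula Peb(G). -/
noncomputable def Peb (G : PGraph) : Set Clause := (fun v => ClauseOf G v) '' ↑G.verts

/-- A legal move of the pebbling game: place a pebble on a vertex all of whose
predecessors are pebbled (for sources this allows placement at any time), or remove
a pebble from any vertex. -/
def PebStep (G : PGraph) (C D : Finset ℕ) : Prop :=
  (∃ v ∈ G.verts, preds G v ⊆ C ∧ D = insert v C) ∨ (∃ v, D = C.erase v)

/-- A (successful) strategy for the pebbling game on G: a sequence of configurations
starting from the empty configuration, each obtained from the previous by a legal
move, ending with a pebble on the sink. -/
def IsStrategy (G : PGraph) (L : List (Finset ℕ)) : Prop :=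
  L.head? = some ∅ ∧ (∃ C, L.getLast? = some C ∧ G.sink ∈ C) ∧ List.Chain' (PebStep G) L

/-- The cost of a strategy: the maximum number of pebbles simultaneously on the graph. -/
def cost (L : List (Finset ℕ)) : ℕ := (L.map Finset.card).foldr max 0

/-- The pebbling number ♯G: the minimum cost of a strategy for the pebbling game on G. -/
noncomputable def pebNum (G : PGraph) : ℕ :=
  sInf { p | ∃ L : List (Finset ℕ), IsStrategy G L ∧ cost L ≤ p }

/-- A v-critical assignment for Peb(G). -/
def IsCritical (G : PGraph) (v : ℕ) (a : ℕ → Bool) : Prop :=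
  ¬ clauseSat a (ClauseOf G v) ∧ ∀ C ∈ Peb G, C ≠ ClauseOf G v → clauseSat a C

open Relation

namespace PGraph

variable {G : PGraph}

lemma mem_preds {u v : ℕ} : u ∈ preds G v ↔ (u, v) ∈ G.edges := by
  simp [preds]

lemma exists_isCritical {v : ℕ} (hacyc : ¬ TransGen (edgeRel G) v v)
    (hsink : Reach G v G.sink) : ∃ a : ℕ → Bool, IsCritical G v a := by
  refine ⟨fun u => !decide (Reach G v u), ?_, ?_⟩
  · rintro ⟨l, hl, hval⟩
    rcases Finset.mem_union.mp hl with hpred | hself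
    · obtain ⟨u, hu, rfl⟩ := Finset.mem_image.mp hpred
      have hvu : Reach G v u := by simpa using hval
      exact hacyc (TransGen.tail' hvu (mem_preds.mp hu))
    · split_ifs at hself with hv
      · simp at hself
      · rw [Finset.mem_singleton.mp hself] at hval
        simp only [Bool.not_eq_eq_eq_not, Bool.not_true, decide_eq_false_iff_not, ite_true] at hval
        exact hval ReflTransGen.refl
  · rintro C ⟨w, -, rfl⟩ hne
    have hwv : w ≠ v := by rintro rfl; exact hne rfl
    by_cases hvw : Reach G v w
    · obtain hw | ⟨u, hvu, huw⟩ := hvw.cases_tail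
      · exact absurd hw hwv
      · refine ⟨(u, false), Finset.mem_union_left _ ?_, by simpa using (show Reach G v u from hvu)⟩
        exact Finset.mem_image.mpr ⟨u, mem_preds.mpr huw, rfl⟩
    · have hws : w ≠ G.sink := by rintro rfl; exact hvw hsink
      exact ⟨(w, true), Finset.mem_union_right _ (by simp [hws]), by simpa using hvw⟩

variable (G) in
noncomputable def ancestors (v : ℕ) : Finset ℕ := G.verts.filter (Reach G · v)

lemma ancestors_ssubset {u v : ℕ} (hacyc : ¬ TransGen (edgeRel G) v v) (hv : v ∈ G.verts)
    (huv : (u, v) ∈ G.edges) : ancestors G u ⊂ ancestors G v := by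
  refine Finset.ssubset_iff_subset_ne.mpr ⟨?_, fun heq => ?_⟩
  · intro w hw
    simp only [ancestors, Finset.mem_filter] at hw ⊢
    exact ⟨hw.1, hw.2.tail huv⟩
  · have hvu : v ∈ ancestors G u := heq ▸ Finset.mem_filter.mpr ⟨hv, ReflTransGen.refl⟩
    exact hacyc (TransGen.tail' (Finset.mem_filter.mp hvu).2 huv)

lemma exists_mem_forall_not_mem_preds (hacyc : ∀ v, ¬ TransGen (edgeRel G) v v) {S : Finset ℕ}
    (hS : S ⊆ G.verts) (hne : S.Nonempty) : ∃ v ∈ S, ∀ w ∈ S, v ∉ preds G w := by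
  obtain ⟨v, hvS, hmax⟩ := S.exists_max_image (fun v => (ancestors G v).card) hne
  refine ⟨v, hvS, fun w hwS hvw => ?_⟩
  have := Finset.card_lt_card (ancestors_ssubset (hacyc w) (hS hwS) (mem_preds.mp hvw))
  exact (hmax w hwS).not_gt this

lemma exists_pebbling_of_predsClosed (hacyc : ∀ v, ¬ TransGen (edgeRel G) v v) (S : Finset ℕ)
    (hS : S ⊆ G.verts) (hclosed : ∀ w ∈ S, preds G w ⊆ S) :
    ∃ L : List (Finset ℕ), L.head? = some ∅ ∧ L.getLast? = some S ∧ L.IsChain (PebStep G) ∧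
      ∀ C ∈ L, C ⊆ S := by
  induction S using Finset.strongInduction with
  | H S ih =>
    obtain rfl | hne := S.eq_empty_or_nonempty
    · exact ⟨[∅], rfl, rfl, List.isChain_singleton _, by simp⟩
    obtain ⟨v, hvS, hvmax⟩ := exists_mem_forall_not_mem_preds hacyc hS hne
    have hpreds : preds G v ⊆ S.erase v := fun u hu =>
      Finset.mem_erase.mpr ⟨by rintro rfl; exact hvmax u (hclosed u hvS hu) hu, hclosed v hvS hu⟩
    have hclosed' : ∀ w ∈ S.erase v, preds G w ⊆ S.erase v := fun w hw u hu =>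
      Finset.mem_erase.mpr ⟨by rintro rfl; exact hvmax w (Finset.mem_of_mem_erase hw) hu,
        hclosed w (Finset.mem_of_mem_erase hw) hu⟩
    obtain ⟨L, hhead, hlast, hchain, hsub⟩ := ih _ (Finset.erase_ssubset hvS)
      ((Finset.erase_subset _ _).trans hS) hclosed'
    have hL : L ≠ [] := by rintro rfl; simp at hlast
    refine ⟨L ++ [S], (L.head?_append_of_ne_nil hL).trans hhead, List.getLast?_concat .., ?_, ?_⟩
    · refine List.isChain_append.mpr ⟨hchain, List.isChain_singleton _, ?_⟩
      intro C hC D hD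
      rw [hlast, Option.mem_some_iff] at hC
      rw [List.head?_cons, Option.mem_some_iff] at hD
      subst hC hD
      exact Or.inl ⟨v, hS hvS, hpreds, (Finset.insert_erase hvS).symm⟩
    · intro C hC
      rcases List.mem_append.mp hC with hCL | hCS
      · exact (hsub C hCL).trans (Finset.erase_subset _ _)
      · rw [List.mem_singleton.mp hCS]

lemma cost_le_of_forall_card_le {L : List (Finset ℕ)} {p : ℕ} (h : ∀ C ∈ L, C.card ≤ p) :
    cost L ≤ p := by
  induction L with
  | nil => exact Nat.zero_le p
  | cons C L ih =>
    exact max_le (h C List.mem_cons_self) (ih fun D hD => h D (List.mem_cons_of_mem C hD))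

lemma pebNum_le_card_verts (hsink : G.sink ∈ G.verts)
    (hedges : ∀ e ∈ G.edges, e.1 ∈ G.verts)
    (hacyc : ∀ v, ¬ TransGen (edgeRel G) v v) : pebNum G ≤ G.verts.card := by
  obtain ⟨L, hhead, hlast, hchain, hsub⟩ := exists_pebbling_of_predsClosed hacyc G.verts
    subset_rfl fun _ _ u hu => hedges _ (mem_preds.mp hu)
  exact Nat.sInf_le ⟨L, ⟨hhead, ⟨G.verts, hlast, hsink⟩, hchain⟩,
    cost_le_of_forall_card_le fun C hC => Finset.card_le_card (hsub C hC)⟩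

end PGraph

/-- If G is a pointed graph with pebbling number p, then at least p vertices of G
admit a v-critical assignment for Peb(G); in particular G has at least p vertices. -/
theorem critical_assignments_count (G : PGraph) (hG : IsPointed G) :
    pebNum G ≤ (G.verts.filter (fun v => ∃ a : ℕ → Bool, IsCritical G v a)).card ∧
    pebNum G ≤ G.verts.card := by
  obtain ⟨hsink, hedges, hacyc, -, hreach⟩ := hG
  have hall : G.verts.filter (fun v => ∃ a : ℕ → Bool, IsCritical G v a) = G.verts :=
    Finset.filter_eq_self.mpr fun v hv => PGraph.exists_isCritical (hacyc v) (hreach v hv)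
  have hcard : pebNum G ≤ G.verts.card :=
    PGraph.pebNum_le_card_verts hsink (fun e he => (hedges e he).1) hacyc
  rw [hall]
  exact ⟨hcard, hcard⟩
end

section
/- For every pointed graph G restricted by a pebbling restriction [[v := b]] (b ∈ {0,1}), the restricted clause set satisfies Peb(G)↾[[v := b]] = Peb(G[v := b]), where G[v := 0] = G↾v (the subgraph of vertices from which v is reachable, with sink v) and G[v := 1] is obtained by deleting v and restricting to vertices from which the sink remains reachable. -/
attribute [local instance] Classical.propDecidable

/-- G[v:=0]: the induced subgraph on the vertices from which v is reachable, with v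
as the new sink. -/
noncomputable def restrict0 (G : PGraph) (v : ℕ) : PGraph where
  verts := G.verts.filter (fun u => Reach G u v)
  edges := G.edges.filter (fun e => Reach G e.1 v ∧ Reach G e.2 v)
  sink := v

/-- Deletion of a vertex together with all edges entering or leaving it. -/
def deleteVert (G : PGraph) (v : ℕ) : PGraph where
  verts := G.verts.erase v
  edges := G.edges.filter (fun e => e.1 ≠ v ∧ e.2 ≠ v)
  sink := G.sink

/-- Restriction of a graph to the vertices from which the sink is reachable. -/
noncomputable def restrictSink (G : PGraph) : PGraph where
  verts := G.verts.filter (fun u => Reach G u G.sink)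
  edges := G.edges.filter (fun e => Reach G e.1 G.sink ∧ Reach G e.2 G.sink)
  sink := G.sink

/-- G[v:=1]: delete v and all incident edges, then restrict to the vertices from which
the original sink remains reachable. -/
noncomputable def restrict1 (G : PGraph) (v : ℕ) : PGraph := restrictSink (deleteVert G v)

/-- Partial assignments. -/
def PAssign := ℕ → Option Bool

/-- Restriction of a set of clauses by a partial assignment: satisfied clauses are
removed, and falsified literals are deleted from the remaining clauses. -/
noncomputable def restrictSet (α : PAssign) (S : Set Clause) : Set Clause :=
  { D | ∃ C ∈ S, (¬ ∃ l ∈ C, α l.1 = some l.2) ∧ D = C.filter (fun l => α l.1 = none) }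

/-- One step of an implicational chain: a occurs negatively and b positively in some
clause of S. -/
def ImpStep (S : Set Clause) (a b : ℕ) : Prop :=
  ∃ C ∈ S, (a, false) ∈ C ∧ (b, true) ∈ C

/-- There is an implicational chain from u to ⊥ in S (⊥ counting as a positive
occurrence in any purely negative clause). -/
def ChainToBot (S : Set Clause) (u : ℕ) : Prop :=
  ∃ w, Relation.ReflTransGen (ImpStep S) u w ∧
    ∃ C ∈ S, (w, false) ∈ C ∧ ∀ l ∈ C, l.2 = false

/-- The pebbling restriction [[v := 1]]: set v to 1, then set to 1 every variable from
which no implicational chain to ⊥ remains in the restricted clause set. -/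
noncomputable def assign1 (G : PGraph) (v : ℕ) : PAssign := fun u =>
  if u = v then some true
  else if ¬ ChainToBot
      (restrictSet (fun w => if w = v then some true else none) (Peb G)) u then
    some true
  else none

/-- A directed path from v to the sink of G. -/
def IsPathToSink (G : PGraph) (π : List ℕ) (v : ℕ) : Prop :=
  π.head? = some v ∧ π.getLast? = some G.sink ∧
  List.Chain' (edgeRel G) π ∧ ∀ u ∈ π, u ∈ G.verts

/-- The pebbling restriction [[v := 0]] determined by a path π from v to the sink:
set all vertices on π to 0, and set to 1 every vertex not on π from which v is not
reachable. -/
noncomputable def assign0 (G : PGraph) (v : ℕ) (π : List ℕ) : PAssign := fun u =>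
  if u ∈ π then some false
  else if ¬ Reach G u v then some true
  else none

/-!
Under `[[v := 0]]` a clause of `Peb(G)` survives exactly when its vertex reaches `v`: a vertex
on `π` other than `v` has its predecessor on `π` set to `0`, a vertex off `π` that cannot reach
`v` is set to `1`, while by acyclicity no predecessor of a vertex reaching `v` lies on `π`.
For `[[v := 1]]`, setting `v` alone to `1` turns `Peb(G)` into `Peb(G - v)`, and in a pebbling
formula the implicational chains to `⊥` are exactly the paths to the sink. So the second step
sets to `1` precisely the vertices of `G - v` from which the sink is no longer reachable.
-/

theorem Relation.transGen_iff_exists_reflTransGen_ne {α : Type*} {r : α → α → Prop} {a t : α} :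
    Relation.TransGen r a t ↔
      ∃ w, Relation.ReflTransGen (fun x y => r x y ∧ y ≠ t) a w ∧ r w t := by
  constructor
  · intro h
    induction h using Relation.TransGen.head_induction_on with
    | single hat => exact ⟨_, .refl, hat⟩
    | @head a c hac _ ih =>
      by_cases hct : c = t
      · exact ⟨a, .refl, hct ▸ hac⟩
      · obtain ⟨w, hcw, hwt⟩ := ih
        exact ⟨w, .head ⟨hac, hct⟩ hcw, hwt⟩
  · rintro ⟨w, haw, hwt⟩
    exact .tail' (Relation.ReflTransGen.mono (fun _ _ h => h.1) _ _ haw) hwt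

section Clauses

variable {G H : PGraph} {α : PAssign} {u w : ℕ}

theorem mem_preds : u ∈ preds G w ↔ (u, w) ∈ G.edges := by
  simp [preds]

theorem neg_mem_clauseOf : (u, false) ∈ ClauseOf G w ↔ (u, w) ∈ G.edges := by
  unfold ClauseOf; split_ifs <;> simp [mem_preds]

theorem pos_mem_clauseOf : (u, true) ∈ ClauseOf G w ↔ w ≠ G.sink ∧ u = w := by
  unfold ClauseOf; split_ifs <;> simp [*]

theorem clauseOf_all_neg_iff : (∀ l ∈ ClauseOf G w, l.2 = false) ↔ w = G.sink := by
  constructor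
  · intro h
    by_contra hw
    simpa using h _ (pos_mem_clauseOf.2 ⟨hw, rfl⟩)
  · rintro rfl ⟨u, _ | _⟩ hl
    · rfl
    · exact absurd rfl (pos_mem_clauseOf.1 hl).1

theorem exists_sat_clauseOf_iff :
    (∃ l ∈ ClauseOf G w, α l.1 = some l.2) ↔
      (∃ u, (u, w) ∈ G.edges ∧ α u = some false) ∨ (w ≠ G.sink ∧ α w = some true) := by
  simp only [Prod.exists, Bool.exists_bool, neg_mem_clauseOf, pos_mem_clauseOf]
  grind

theorem filter_clauseOf_eq (hedges : ∀ u, (u, w) ∈ H.edges ↔ (u, w) ∈ G.edges ∧ α u = none)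
    (hsink : w ≠ H.sink ↔ w ≠ G.sink ∧ α w = none) :
    (ClauseOf G w).filter (fun l => α l.1 = none) = ClauseOf H w := by
  ext ⟨u, _ | _⟩
  · simp [neg_mem_clauseOf, hedges]
  · simp only [Finset.mem_filter, pos_mem_clauseOf, hsink]
    grind

theorem restrictSet_peb_eq
    (hverts : ∀ w, w ∈ H.verts ↔ w ∈ G.verts ∧ ¬ ∃ l ∈ ClauseOf G w, α l.1 = some l.2)
    (hclause : ∀ w ∈ H.verts, (ClauseOf G w).filter (fun l => α l.1 = none) = ClauseOf H w) :
    restrictSet α (Peb G) = Peb H := by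
  ext D
  constructor
  · rintro ⟨_, ⟨w, hw, rfl⟩, hunsat, rfl⟩
    have hwH := (hverts w).2 ⟨hw, hunsat⟩
    exact ⟨w, hwH, (hclause w hwH).symm⟩
  · rintro ⟨w, hw, rfl⟩
    obtain ⟨hwG, hunsat⟩ := (hverts w).1 hw
    exact ⟨_, ⟨w, hwG, rfl⟩, hunsat, (hclause w hw).symm⟩

theorem impStep_peb_iff {a b : ℕ} :
    ImpStep (Peb H) a b ↔ (a, b) ∈ H.edges ∧ b ∈ H.verts ∧ b ≠ H.sink := by
  constructor
  · rintro ⟨_, ⟨x, hx, rfl⟩, ha, hb⟩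
    obtain ⟨hxs, rfl⟩ := pos_mem_clauseOf.1 hb
    exact ⟨neg_mem_clauseOf.1 ha, hx, hxs⟩
  · rintro ⟨hab, hb, hbs⟩
    exact ⟨_, ⟨b, hb, rfl⟩, neg_mem_clauseOf.2 hab, pos_mem_clauseOf.2 ⟨hbs, rfl⟩⟩

theorem chainToBot_peb_iff (hsink : H.sink ∈ H.verts) (hedges : ∀ e ∈ H.edges, e.2 ∈ H.verts) :
    ChainToBot (Peb H) u ↔ Relation.TransGen (edgeRel H) u H.sink := by
  have hstep : ImpStep (Peb H) = fun a b => edgeRel H a b ∧ b ≠ H.sink := by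
    ext a b
    rw [impStep_peb_iff]
    exact ⟨fun h => ⟨h.1, h.2.2⟩, fun h => ⟨h.1, hedges _ h.1, h.2⟩⟩
  have hbot : ∀ w, (∃ C ∈ Peb H, (w, false) ∈ C ∧ ∀ l ∈ C, l.2 = false) ↔
      edgeRel H w H.sink := by
    refine fun w => ⟨?_, fun h => ⟨_, ⟨H.sink, hsink, rfl⟩, neg_mem_clauseOf.2 h,
      clauseOf_all_neg_iff.2 rfl⟩⟩
    rintro ⟨_, ⟨x, _, rfl⟩, hw, hneg⟩
    rw [clauseOf_all_neg_iff.1 hneg] at hw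
    exact neg_mem_clauseOf.1 hw
  simp only [ChainToBot, hstep, hbot]
  exact Relation.transGen_iff_exists_reflTransGen_ne.symm

end Clauses

theorem reach_iff_transGen_of_ne {G : PGraph} {a b : ℕ} (hab : a ≠ b) :
    Reach G a b ↔ Relation.TransGen (edgeRel G) a b := by
  rw [Reach, Relation.reflTransGen_iff_eq_or_transGen, or_iff_right (Ne.symm hab)]

theorem eq_of_reach_of_reach {G : PGraph} (hacyc : ∀ u, ¬ Relation.TransGen (edgeRel G) u u)
    {a b : ℕ} (hab : Reach G a b) (hba : Reach G b a) : a = b := by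
  rcases Relation.reflTransGen_iff_eq_or_transGen.1 hab with rfl | hab
  · rfl
  · exact absurd (hab.trans_left hba) (hacyc a)

namespace IsPathToSink

variable {G : PGraph} {π : List ℕ} {v u : ℕ} (hπ : IsPathToSink G π v)
include hπ

theorem start_mem : v ∈ π :=
  List.mem_of_mem_head? hπ.1

theorem sink_mem : G.sink ∈ π :=
  List.mem_of_getLast? hπ.2.1

theorem reach_of_mem (hu : u ∈ π) : Reach G v u := by
  refine hπ.2.2.1.induction (Reach G v) π (fun _ _ hxy hx => hx.tail hxy) (fun hne => ?_) u hu
  rw [(List.head_eq_iff_head?_eq_some hne).2 hπ.1]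
  exact .refl

theorem exists_edge_of_mem (hu : u ∈ π) (huv : u ≠ v) : ∃ p ∈ π, (p, u) ∈ G.edges := by
  obtain ⟨s, t, rfl⟩ := List.mem_iff_append.1 hu
  have hs : s ≠ [] := by
    rintro rfl
    exact huv (by simpa using hπ.1)
  exact ⟨s.getLast hs, by simp [List.getLast_mem],
    hπ.2.2.1.rel_getLast_head_of_append hs (List.cons_ne_nil _ _)⟩

variable (hacyc : ∀ u, ¬ Relation.TransGen (edgeRel G) u u)
include hacyc

theorem eq_of_mem_of_reach (hu : u ∈ π) (huv : Reach G u v) : u = v :=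
  eq_of_reach_of_reach hacyc huv (hπ.reach_of_mem hu)

theorem not_mem_of_edge_of_reach {w : ℕ} (huw : (u, w) ∈ G.edges) (hwv : Reach G w v) :
    u ∉ π :=
  fun hu => hacyc v ((Relation.TransGen.tail' (hπ.reach_of_mem hu) huw).trans_left hwv)

end IsPathToSink

section RestrictZero

variable {G : PGraph} {π : List ℕ} {v u : ℕ}

theorem assign0_eq_none : assign0 G v π u = none ↔ u ∉ π ∧ Reach G u v := by
  unfold assign0; split_ifs <;> simp_all

theorem assign0_eq_some_false : assign0 G v π u = some false ↔ u ∈ π := by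
  unfold assign0; split_ifs <;> simp_all

theorem assign0_eq_some_true : assign0 G v π u = some true ↔ u ∉ π ∧ ¬ Reach G u v := by
  unfold assign0; split_ifs <;> simp_all

variable (hacyc : ∀ u, ¬ Relation.TransGen (edgeRel G) u u) (hπ : IsPathToSink G π v)
include hacyc hπ

theorem exists_sat_clauseOf_assign0_iff {w : ℕ} :
    (∃ l ∈ ClauseOf G w, assign0 G v π l.1 = some l.2) ↔ ¬ Reach G w v := by
  rw [exists_sat_clauseOf_iff]
  simp only [assign0_eq_some_false, assign0_eq_some_true]
  constructor
  · rintro (⟨u, huw, hu⟩ | ⟨-, -, hwv⟩)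
    · exact fun hwv => hπ.not_mem_of_edge_of_reach hacyc huw hwv hu
    · exact hwv
  · intro hwv
    by_cases hwπ : w ∈ π
    · obtain ⟨p, hp, hpw⟩ := hπ.exists_edge_of_mem hwπ (by rintro rfl; exact hwv .refl)
      exact .inl ⟨p, hpw, hp⟩
    · exact .inr ⟨fun hws => hwπ (hws ▸ hπ.sink_mem), hwπ, hwv⟩

theorem restrictSet_assign0 : restrictSet (assign0 G v π) (Peb G) = Peb (restrict0 G v) := by
  refine restrictSet_peb_eq (fun w => ?_) (fun w hw => ?_)
  · simp [restrict0, exists_sat_clauseOf_assign0_iff hacyc hπ]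
  have hwv : Reach G w v := (Finset.mem_filter.1 hw).2
  have hwπ : w ∈ π ↔ w = v :=
    ⟨fun h => hπ.eq_of_mem_of_reach hacyc h hwv, fun h => h ▸ hπ.start_mem⟩
  refine filter_clauseOf_eq (fun u => ?_) ?_
  · simp only [restrict0, Finset.mem_filter, assign0_eq_none]
    exact ⟨fun ⟨huw, hu, _⟩ => ⟨huw, hπ.not_mem_of_edge_of_reach hacyc huw hwv, hu⟩,
      fun ⟨huw, _, hu⟩ => ⟨huw, hu, hwv⟩⟩
  · show w ≠ v ↔ _
    rw [assign0_eq_none, hwπ]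
    exact ⟨fun hne => ⟨fun hws => hne (hwπ.1 (hws ▸ hπ.sink_mem)), hne, hwv⟩, fun h => h.2.1⟩

end RestrictZero

section RestrictOne

variable {G : PGraph} {v u : ℕ}

theorem mem_restrictSink_verts {H : PGraph} :
    u ∈ (restrictSink H).verts ↔ u ∈ H.verts ∧ Reach H u H.sink :=
  Finset.mem_filter

theorem mem_restrictSink_edges {H : PGraph} {w : ℕ} :
    (u, w) ∈ (restrictSink H).edges ↔
      (u, w) ∈ H.edges ∧ Reach H u H.sink ∧ Reach H w H.sink :=
  Finset.mem_filter

theorem deleteVert_sink : (deleteVert G v).sink = G.sink := rfl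

theorem mem_deleteVert_verts : u ∈ (deleteVert G v).verts ↔ u ≠ v ∧ u ∈ G.verts :=
  Finset.mem_erase

theorem mem_deleteVert_edges {w : ℕ} :
    (u, w) ∈ (deleteVert G v).edges ↔ (u, w) ∈ G.edges ∧ u ≠ v ∧ w ≠ v := by
  simp [deleteVert]

theorem restrictSet_single_true_peb (hvs : v ≠ G.sink) :
    restrictSet (fun w => if w = v then some true else none) (Peb G) = Peb (deleteVert G v) := by
  set α : PAssign := fun w => if w = v then some true else none
  refine restrictSet_peb_eq (fun w => ?_) (fun w hw => ?_)
  · rw [exists_sat_clauseOf_iff (α := α)]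
    simp only [deleteVert, Finset.mem_erase, α]
    grind
  have hwv : w ≠ v := (Finset.mem_erase.1 hw).1
  refine filter_clauseOf_eq (α := α) (fun u => ?_) ?_ <;> simp [deleteVert, hwv, α]

theorem assign1_ne_some_false : assign1 G v u ≠ some false := by
  unfold assign1; split_ifs <;> simp

variable (hsink : G.sink ∈ G.verts) (hedges : ∀ e ∈ G.edges, e.2 ∈ G.verts) (hvs : v ≠ G.sink)
include hsink hedges hvs

theorem assign1_eq_none_iff :
    assign1 G v u = none ↔ u ≠ v ∧ Relation.TransGen (edgeRel (deleteVert G v)) u G.sink := by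
  have hchain : ChainToBot (Peb (deleteVert G v)) u ↔
      Relation.TransGen (edgeRel (deleteVert G v)) u G.sink :=
    chainToBot_peb_iff (mem_deleteVert_verts.2 ⟨hvs.symm, hsink⟩) fun ⟨_, _⟩ he =>
      have ⟨he, _, hbv⟩ := mem_deleteVert_edges.1 he
      mem_deleteVert_verts.2 ⟨hbv, hedges _ he⟩
  unfold assign1
  rw [restrictSet_single_true_peb hvs, hchain]
  split_ifs <;> simp_all

theorem assign1_eq_some_true_iff :
    assign1 G v u = some true ↔
      ¬ (u ≠ v ∧ Relation.TransGen (edgeRel (deleteVert G v)) u G.sink) := by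
  rw [← assign1_eq_none_iff hsink hedges hvs]
  rcases h : assign1 G v u with _ | _ | _
  · simp
  · exact absurd h assign1_ne_some_false
  · simp

theorem restrictSet_assign1 : restrictSet (assign1 G v) (Peb G) = Peb (restrict1 G v) := by
  refine restrictSet_peb_eq (fun w => ?_) (fun w hw => ?_)
  · rw [exists_sat_clauseOf_iff]
    simp only [assign1_ne_some_false, and_false, exists_false, false_or,
      assign1_eq_some_true_iff hsink hedges hvs]
    rw [restrict1, mem_restrictSink_verts, mem_deleteVert_verts, deleteVert_sink]
    by_cases hws : w = G.sink
    · subst hws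
      exact ⟨fun h => ⟨h.1.2, fun h' => h'.1 rfl⟩, fun h => ⟨⟨hvs.symm, h.1⟩, .refl⟩⟩
    · rw [reach_iff_transGen_of_ne hws]
      tauto
  rw [restrict1, mem_restrictSink_verts, mem_deleteVert_verts, deleteVert_sink] at hw
  obtain ⟨⟨hwv, -⟩, hw⟩ := hw
  refine filter_clauseOf_eq (fun u => ?_) ?_
  · rw [restrict1, mem_restrictSink_edges, mem_deleteVert_edges, deleteVert_sink,
      assign1_eq_none_iff hsink hedges hvs]
    constructor
    · rintro ⟨⟨huw, huv, -⟩, -, -⟩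
      exact ⟨huw, huv, .head' (mem_deleteVert_edges.2 ⟨huw, huv, hwv⟩) hw⟩
    · rintro ⟨huw, huv, hu⟩
      exact ⟨⟨huw, huv, hwv⟩, hu.to_reflTransGen, hw⟩
  · show w ≠ G.sink ↔ _
    rw [assign1_eq_none_iff hsink hedges hvs]
    exact ⟨fun hws => ⟨hws, hwv, (reach_iff_transGen_of_ne hws).1 hw⟩, fun h => h.1⟩

end RestrictOne

theorem peb_restriction_general (G : PGraph) (hG : IsPointed G)
    (v : ℕ) (hvs : v ≠ G.sink) :
    (∀ π : List ℕ, IsPathToSink G π v →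
      restrictSet (assign0 G v π) (Peb G) = Peb (restrict0 G v)) ∧
    restrictSet (assign1 G v) (Peb G) = Peb (restrict1 G v) :=
  ⟨fun _ hπ => restrictSet_assign0 hG.2.2.1 hπ,
    restrictSet_assign1 hG.1 (fun e he => (hG.2.1 e he).2) hvs⟩

/-- Peb(G)↾[[v := b]] = Peb(G[v := b]), for b = 0 (independently of the chosen path)
and for b = 1. -/
theorem peb_restriction (G : PGraph) (hG : IsPointed G)
    (v : ℕ) (hv : v ∈ G.verts) (hvs : v ≠ G.sink) :
    (∀ π : List ℕ, IsPathToSink G π v →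
      restrictSet (assign0 G v π) (Peb G) = Peb (restrict0 G v)) ∧
    restrictSet (assign1 G v) (Peb G) = Peb (restrict1 G v) :=
  peb_restriction_general G hG v hvs
end
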